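/- arXiv:2003.00008 — 3 statements merged into one kernel-verified Lean document; each statement's English description precedes it below -/
import Mathlib

section
/- Let k be a field of characteristic 0 and let A be a formal Laurent series in k((t)) with at worst a simple pole (i.e., all coefficients of t^j for j < -1 vanish). Let c denote the coefficient of t^{-1} in A. Then there exists a unit u of k[[t]] with u ≡ 1 (mod t) such that A + u'·u^{-1} = c·t^{-1}. -/
/-! Subtracting the residue term leaves a power series `P = A - c t⁻¹`, so it suffices to find
`u ∈ k⟦t⟧` with `u(0) = 1` and `u' = -P u`. Comparing coefficients, `(n + 1) u_{n+1}` is determined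
by `u_0, …, u_n`, and in characteristic `0` this recursion can always be solved. -/

/-- The formal derivative `d/dt` of a formal Laurent series. -/
noncomputable def lderiv {k : Type*} [Field k] (x : LaurentSeries k) : LaurentSeries k where
  coeff j := ((j + 1 : ℤ) : k) * x.coeff (j + 1)
  isPWO_support' := by
    apply Set.IsPWO.mono (x.isPWO_support.image_of_monotone
      (f := fun a : ℤ => a - 1) (fun a b h => by simpa using h))
    intro j hj
    have : x.coeff (j + 1) ≠ 0 := fun h => hj (by simp [Function.mem_support] at hj ⊢; simp [h])
    exact ⟨j + 1, this, by ring⟩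

open PowerSeries

namespace PowerSeries

variable {k : Type*} [Field k]

noncomputable def linearODECoeff (P : k⟦X⟧) : ℕ → k
  | 0 => 1
  | n + 1 => ((n : k) + 1)⁻¹ * ∑ i ∈ Finset.range (n + 1), coeff i P * linearODECoeff P (n - i)
  decreasing_by omega

theorem derivative_mk_linearODECoeff [CharZero k] (P : k⟦X⟧) :
    d⁄dX k (mk (linearODECoeff P)) = P * mk (linearODECoeff P) := by
  ext n
  have hn : (n : k) + 1 ≠ 0 := by exact_mod_cast n.succ_ne_zero
  rw [coeff_derivative, coeff_mk, linearODECoeff, coeff_mul,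
    Finset.Nat.sum_antidiagonal_eq_sum_range_succ_mk]
  simp only [coeff_mk]
  field_simp

theorem exists_constantCoeff_eq_one_and_derivative_eq_mul [CharZero k] (P : k⟦X⟧) :
    ∃ u : k⟦X⟧, constantCoeff u = 1 ∧ d⁄dX k u = P * u :=
  ⟨mk (linearODECoeff P), by simp [linearODECoeff], derivative_mk_linearODECoeff P⟩

end PowerSeries

@[simp]
theorem coeff_lderiv {k : Type*} [Field k] (x : LaurentSeries k) (j : ℤ) :
    (lderiv x).coeff j = ((j + 1 : ℤ) : k) * x.coeff (j + 1) :=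
  rfl

theorem lderiv_coe {k : Type*} [Field k] (f : k⟦X⟧) :
    lderiv (f : LaurentSeries k) = (d⁄dX k f : LaurentSeries k) := by
  ext j
  rcases lt_trichotomy j (-1) with hj | rfl | hj
  · simp [PowerSeries.coeff_coe, show j < 0 by omega, show j + 1 < 0 by omega]
  · simp [PowerSeries.coeff_coe]
  · obtain ⟨n, rfl⟩ := Int.eq_ofNat_of_zero_le (by omega : 0 ≤ j)
    rw [coeff_lderiv, show (n : ℤ) + 1 = ((n + 1 : ℕ) : ℤ) by push_cast; ring,
      LaurentSeries.coeff_coe_powerSeries, LaurentSeries.coeff_coe_powerSeries, coeff_derivative]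
    push_cast
    ring

theorem coe_mk_coeff_eq_sub_single {k : Type*} [Field k] (A : LaurentSeries k)
    (hA : ∀ j : ℤ, j < -1 → A.coeff j = 0) :
    ((mk fun n : ℕ => A.coeff n : k⟦X⟧) : LaurentSeries k) =
      A - HahnSeries.single (-1) (A.coeff (-1)) := by
  ext j
  rw [PowerSeries.coeff_coe, HahnSeries.coeff_sub]
  rcases lt_trichotomy j (-1) with hj | rfl | hj
  · rw [if_pos (by omega), HahnSeries.coeff_single_of_ne (by omega), hA j hj, sub_zero]
  · simp
  · rw [if_neg (by omega), HahnSeries.coeff_single_of_ne (by omega), sub_zero, coeff_mk]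
    congr
    omega

/-- A `𝔾ₘ`-connection of the first kind can be gauged, by a unit of `k⟦t⟧`
congruent to `1` mod `t`, into the canonical form `c·t⁻¹` where `c` is its residue. -/
theorem stmt_1 {k : Type*} [Field k] [CharZero k] (A : LaurentSeries k)
    (hA : ∀ j : ℤ, j < -1 → A.coeff j = 0) :
    ∃ u : LaurentSeries k, IsUnit u ∧ (∀ j : ℤ, j < 0 → u.coeff j = 0) ∧ u.coeff 0 = 1 ∧
      A + lderiv u * u⁻¹ = HahnSeries.single (-1 : ℤ) (A.coeff (-1)) := by
  obtain ⟨u, hu0, hu⟩ :=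
    exists_constantCoeff_eq_one_and_derivative_eq_mul (-mk fun n : ℕ => A.coeff n)
  have hu0' : (u : LaurentSeries k).coeff 0 = 1 := by
    rw [← Nat.cast_zero, LaurentSeries.coeff_coe_powerSeries, coeff_zero_eq_constantCoeff_apply,
      hu0]
  have hne : (u : LaurentSeries k) ≠ 0 := fun h => by simp [h] at hu0'
  refine ⟨u, isUnit_iff_ne_zero.2 hne, fun j hj => by simp [PowerSeries.coeff_coe, hj],
    hu0', ?_⟩
  rw [lderiv_coe, hu, PowerSeries.coe_mul, PowerSeries.coe_neg, coe_mk_coeff_eq_sub_single A hA,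
    mul_assoc, mul_inv_cancel₀ hne]
  ring
end

section
/- Let k be a field of characteristic 0, let c ∈ k, and let x be a nonzero formal Laurent series in k((t)) satisfying t·x' = c·x. Then c is an integer (i.e., c = n·1 for some integer n) and x = a·t^n for some nonzero a ∈ k, where n is the image of c in the integers. -/
/-! Comparing coefficients, `t·x' = c·x` says `j·xⱼ = c·xⱼ` for every `j`, so `c = j` wherever
`xⱼ ≠ 0`. In characteristic zero this pins down a single exponent `n`, and `x` is a monomial in `tⁿ`. -/

theorem HahnSeries.eq_smul_single_of_coeff_eq_zero {Γ R : Type*} [PartialOrder Γ] [Semiring R]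
    {x : HahnSeries Γ R} {n : Γ} (h : ∀ j ≠ n, x.coeff j = 0) :
    x = x.coeff n • HahnSeries.single n (1 : R) := by
  ext j
  by_cases hj : j = n
  · simp [hj]
  · simp [h j hj, hj]

theorem coeff_single_one_mul_lderiv {k : Type*} [Field k] (x : LaurentSeries k) (j : ℤ) :
    (HahnSeries.single (1 : ℤ) 1 * lderiv x).coeff j = (j : k) * x.coeff j := by
  simpa [lderiv] using
    HahnSeries.coeff_single_mul_add (r := (1 : k)) (x := lderiv x) (a := j - 1) (b := 1)

theorem eq_intCast_of_single_one_mul_lderiv_eq_smul {k : Type*} [Field k] {c : k}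
    {x : LaurentSeries k} (h : HahnSeries.single (1 : ℤ) 1 * lderiv x = c • x) {j : ℤ}
    (hj : x.coeff j ≠ 0) : c = j := by
  have hcoeff := congrArg (HahnSeries.coeff · j) h
  simp only [coeff_single_one_mul_lderiv, HahnSeries.coeff_smul, smul_eq_mul] at hcoeff
  exact (mul_right_cancel₀ hj hcoeff).symm

/-- If a nonzero Laurent series satisfies `t·x' = c·x`, then `c` is an integer `n`
and `x = a·tⁿ` for some nonzero scalar `a`. -/
theorem stmt_3 {k : Type*} [Field k] [CharZero k] (c : k) (x : LaurentSeries k) (hx : x ≠ 0)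
    (h : HahnSeries.single (1 : ℤ) 1 * lderiv x = c • x) :
    ∃ n : ℤ, c = (n : k) ∧ ∃ a : k, a ≠ 0 ∧ x = a • HahnSeries.single n (1 : k) := by
  obtain ⟨n, hn⟩ := HahnSeries.support_nonempty_iff.mpr hx
  have hc := eq_intCast_of_single_one_mul_lderiv_eq_smul h hn
  refine ⟨n, hc, x.coeff n, hn, HahnSeries.eq_smul_single_of_coeff_eq_zero fun j hjn => ?_⟩
  by_contra hj
  exact hjn (Int.cast_injective ((eq_intCast_of_single_one_mul_lderiv_eq_smul h hj).symm.trans hc))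
end

section
/- Let k be an algebraically closed field of characteristic 0 and let A = Σ_{j≥-1} A_j t^j ∈ M_n(k((t))) be a matrix Laurent series with at worst a simple pole. Then there exists x ∈ GL_n(k[[t]]) with x ≡ 1 (mod t) such that the gauge transform B = x·A·x^{-1} + x'·x^{-1} = Σ_{j≥-1} B_j t^j satisfies: B_{-1} = A_{-1}, and for every j ≥ 0 the coefficient B_j lies in the generalized eigenspace of the operator ad(A_{-1}) : M_n(k) → M_n(k), X ↦ [A_{-1}, X], with eigenvalue j+1. -/
open Finset PowerSeries

namespace Module.End

variable {K V : Type*} [Field K] [AddCommGroup V] [Module K V] [FiniteDimensional K V]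

theorem maxGenEigenspace_sup_range_sub_smul (f : Module.End K V) (μ : K) :
    f.maxGenEigenspace μ ⊔ LinearMap.range (f - μ • 1) = ⊤ := by
  obtain ⟨N, hN⟩ :=
    Filter.eventually_atTop.mp (f - μ • 1).eventually_isCompl_ker_pow_range_pow
  refine eq_top_mono (sup_le_sup ?_ ?_) (hN (N + 1) N.le_succ).codisjoint.eq_top
  · exact fun v hv => (mem_maxGenEigenspace f μ v).mpr ⟨N + 1, hv⟩
  · rintro _ ⟨u, rfl⟩
    exact ⟨((f - μ • 1) ^ N) u, by rw [pow_succ', Module.End.mul_apply]⟩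

theorem exists_mem_maxGenEigenspace_add_sub_smul_apply_eq (f : Module.End K V) (μ : K) (v : V) :
    ∃ yz : V × V, yz.1 ∈ f.maxGenEigenspace μ ∧ yz.1 + (f - μ • 1) yz.2 = v := by
  have hv : v ∈ f.maxGenEigenspace μ ⊔ LinearMap.range (f - μ • 1) :=
    (maxGenEigenspace_sup_range_sub_smul f μ).symm ▸ Submodule.mem_top
  obtain ⟨y, hy, _, ⟨z, rfl⟩, rfl⟩ := Submodule.mem_sup.mp hv
  exact ⟨(y, z), hy, rfl⟩

end Module.End

section Recursion

variable {K R : Type*} [Field K] [Ring R] [Algebra K R] [FiniteDimensional K R]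
  (T : Module.End K R) (a : ℕ → R)

/-- The pair `(bₘ, Xₘ)`; at order `m = l + 1` the sums are the part of the order-`m` equation
fixed by lower orders, which must equal `bₘ + (T - m) Xₘ`. -/
noncomputable def alignedCoeffs : ℕ → R × R
  | 0 => (a 0, 1)
  | l + 1 => Classical.choose <| T.exists_mem_maxGenEigenspace_add_sub_smul_apply_eq
      ((l + 1 : ℕ) : K)
      (∑ i : Fin (l + 1), (alignedCoeffs i).2 * a (l + 1 - i)
        - ∑ i : Fin l, (alignedCoeffs (i + 1)).1 * (alignedCoeffs (l - i)).2)

theorem alignedCoeffs_succ_spec (l : ℕ) :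
    (alignedCoeffs T a (l + 1)).1 ∈ T.maxGenEigenspace ((l + 1 : ℕ) : K) ∧
      ∑ i : Fin (l + 1), (alignedCoeffs T a i).2 * a (l + 1 - i)
          - ∑ i : Fin l, (alignedCoeffs T a (i + 1)).1 * (alignedCoeffs T a (l - i)).2
        = (alignedCoeffs T a (l + 1)).1
          + (T - ((l + 1 : ℕ) : K) • 1) (alignedCoeffs T a (l + 1)).2 := by
  rw [alignedCoeffs]
  obtain ⟨hb, hres⟩ :=
    Classical.choose_spec (T.exists_mem_maxGenEigenspace_add_sub_smul_apply_eq _ _)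
  exact ⟨hb, hres.symm⟩

theorem exists_aligned_coeffs (hT : ∀ Y, T Y = a 0 * Y - Y * a 0) :
    ∃ b X : ℕ → R, X 0 = 1 ∧ b 0 = a 0 ∧ (∀ m : ℕ, b m ∈ T.maxGenEigenspace (m : K)) ∧
      ∀ m : ℕ, (m : K) • X m + ∑ p ∈ antidiagonal m, X p.1 * a p.2
        = ∑ p ∈ antidiagonal m, b p.1 * X p.2 := by
  set b := fun m => (alignedCoeffs T a m).1
  set X := fun m => (alignedCoeffs T a m).2
  have hX₀ : X 0 = 1 := by simp [X, alignedCoeffs]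
  have hb₀ : b 0 = a 0 := by simp [b, alignedCoeffs]
  have hsucc := alignedCoeffs_succ_spec T a
  refine ⟨b, X, hX₀, hb₀, fun m => ?_, fun m => ?_⟩
  · cases m with
    | zero => exact (T.mem_maxGenEigenspace _ _).mpr ⟨1, by simp [hb₀, hT]⟩
    | succ l => exact (hsucc l).1
  cases m with
  | zero => simp [hX₀, hb₀]
  | succ l =>
    have hXa : ∑ i : Fin (l + 1), X i * a (l + 1 - i)
        = ∑ p ∈ antidiagonal l, X p.1 * a (p.2 + 1) := by
      rw [Fin.sum_univ_eq_sum_range (fun i => X i * a (l + 1 - i)),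
        Nat.sum_antidiagonal_eq_sum_range_succ (fun i j => X i * a (j + 1))]
      exact sum_congr rfl fun i hi => by
        rw [Nat.sub_add_comm (Nat.lt_succ_iff.mp (mem_range.mp hi))]
    have hbX : ∑ i : Fin l, b (i + 1) * X (l - i) + b (l + 1)
        = ∑ p ∈ antidiagonal l, b (p.1 + 1) * X p.2 := by
      rw [Fin.sum_univ_eq_sum_range (fun i => b (i + 1) * X (l - i)),
        Nat.sum_antidiagonal_eq_sum_range_succ (fun i j => b (i + 1) * X j), sum_range_succ,
        Nat.sub_self, hX₀, mul_one]
    have hres := (hsucc l).2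
    rw [hXa, LinearMap.sub_apply, hT, LinearMap.smul_apply, Module.End.one_apply] at hres
    rw [sub_eq_iff_eq_add] at hres
    rw [Nat.sum_antidiagonal_succ', Nat.sum_antidiagonal_succ, ← hbX, hb₀]
    simp only [hres]
    abel

end Recursion

section PowerSeriesMatrix

variable {k ι : Type*} [CommRing k]

noncomputable def powerSeriesMatrix (c : ℕ → Matrix ι ι k) : Matrix ι ι k⟦X⟧ :=
  Matrix.of fun i j => PowerSeries.mk fun m => c m i j

@[simp]
theorem map_coeff_powerSeriesMatrix (c : ℕ → Matrix ι ι k) (m : ℕ) :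
    (powerSeriesMatrix c).map (coeff m) = c m := by
  ext i j
  simp [powerSeriesMatrix]

theorem Matrix.ext_map_coeff {P Q : Matrix ι ι k⟦X⟧}
    (h : ∀ m, P.map (coeff m) = Q.map (coeff m)) : P = Q :=
  Matrix.ext fun i j => PowerSeries.ext fun m => congrFun (congrFun (h m) i) j

theorem Matrix.map_coeff_mul [Fintype ι] (P Q : Matrix ι ι k⟦X⟧) (m : ℕ) :
    (P * Q).map (coeff m) = ∑ p ∈ antidiagonal m, P.map (coeff p.1) * Q.map (coeff p.2) := by
  ext i j
  simp only [Matrix.map_apply, Matrix.mul_apply, map_sum, coeff_mul, Matrix.sum_apply]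
  exact sum_comm

theorem PowerSeries.coeff_X_mul_derivative (f : k⟦X⟧) (m : ℕ) :
    coeff m (X * d⁄dX k f) = m * coeff m f := by
  cases m with
  | zero => simp
  | succ m => rw [coeff_succ_X_mul, coeff_derivative, mul_comm]; push_cast; rfl

theorem X_mul_derivative_add_mul_eq_mul [Fintype ι] {a b x : ℕ → Matrix ι ι k}
    (h : ∀ m : ℕ, (m : k) • x m + ∑ p ∈ antidiagonal m, x p.1 * a p.2
      = ∑ p ∈ antidiagonal m, b p.1 * x p.2) :
    (powerSeriesMatrix x).map (fun f => X * d⁄dX k f) + powerSeriesMatrix x * powerSeriesMatrix a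
      = powerSeriesMatrix b * powerSeriesMatrix x := by
  refine Matrix.ext_map_coeff fun m => ?_
  have hder :
      ((powerSeriesMatrix x).map fun f => X * d⁄dX k f).map (coeff m) = (m : k) • x m := by
    ext i j
    simp [powerSeriesMatrix, coeff_X_mul_derivative]
  rw [Matrix.map_add _ (map_add _), hder, Matrix.map_coeff_mul, Matrix.map_coeff_mul]
  simpa only [map_coeff_powerSeriesMatrix] using h m

end PowerSeriesMatrix

section LaurentMatrix

open HahnSeries

variable {k ι : Type*} [Field k]

def laurentCoeff (A : Matrix ι ι (LaurentSeries k)) (l : ℤ) : Matrix ι ι k :=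
  Matrix.of fun i j => (A i j).coeff l

theorem laurentCoeff_map_ofPowerSeries_natCast (P : Matrix ι ι k⟦X⟧) (m : ℕ) :
    laurentCoeff (P.map (ofPowerSeries ℤ k)) m = P.map (coeff m) := by
  ext i j
  simp [laurentCoeff]

theorem laurentCoeff_map_ofPowerSeries_of_neg (P : Matrix ι ι k⟦X⟧) {l : ℤ} (hl : l < 0) :
    laurentCoeff (P.map (ofPowerSeries ℤ k)) l = 0 := by
  ext i j
  simp [laurentCoeff, coeff_coe, hl]

theorem coeff_single_neg_one_mul (f : LaurentSeries k) (l : ℤ) :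
    (single (-1) 1 * f).coeff l = f.coeff (l + 1) := by
  simpa using coeff_single_mul_add (r := (1 : k)) (x := f) (a := l + 1) (b := -1)

theorem laurentCoeff_single_neg_one_smul (A : Matrix ι ι (LaurentSeries k)) (l : ℤ) :
    laurentCoeff (single (-1) (1 : k) • A) l = laurentCoeff A (l + 1) := by
  ext i j
  simp [laurentCoeff, coeff_single_neg_one_mul]

theorem lderiv_ofPowerSeries (f : k⟦X⟧) :
    lderiv (ofPowerSeries ℤ k f) = single (-1) 1 * ofPowerSeries ℤ k (X * d⁄dX k f) := by
  ext l
  rw [coeff_single_neg_one_mul]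
  show ((l + 1 : ℤ) : k) * (ofPowerSeries ℤ k f).coeff (l + 1) = _
  rw [coeff_coe, coeff_coe]
  split_ifs with hl
  · simp
  · rw [coeff_X_mul_derivative, ← Int.cast_natCast, Int.natAbs_of_nonneg (by omega)]

theorem eq_single_neg_one_smul_of_coeff_eq_zero (A : Matrix ι ι (LaurentSeries k))
    (hA : ∀ i j, ∀ l < -1, (A i j).coeff l = 0) :
    A = single (-1) (1 : k) •
      (powerSeriesMatrix fun m => laurentCoeff A (m - 1)).map (ofPowerSeries ℤ k) := by
  ext i j l
  rw [Matrix.smul_apply, smul_eq_mul, coeff_single_neg_one_mul, Matrix.map_apply, coeff_coe]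
  split_ifs with hl
  · exact hA i j l (by omega)
  · simp [powerSeriesMatrix, laurentCoeff, Int.natAbs_of_nonneg (by omega : 0 ≤ l + 1)]

theorem Matrix.gauge_eq_of_add_mul_eq [Fintype ι] [DecidableEq ι] {R : Type*} [CommRing R]
    {x A B D : Matrix ι ι R} (hx : IsUnit x) (h : D + x * A = B * x) :
    x * A * x⁻¹ + D * x⁻¹ = B := by
  rw [← add_mul, add_comm, h,
    Matrix.mul_nonsing_inv_cancel_right _ _ ((Matrix.isUnit_iff_isUnit_det x).mp hx)]

theorem isUnit_map_ofPowerSeries [Fintype ι] [DecidableEq ι] {P : Matrix ι ι k⟦X⟧}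
    (hP : P.map (coeff 0) = 1) : IsUnit (P.map (ofPowerSeries ℤ k)) := by
  rw [coeff_zero_eq_constantCoeff] at hP
  have hdet : constantCoeff P.det = 1 := by
    rw [RingHom.map_det, RingHom.mapMatrix_apply, hP, Matrix.det_one]
  have hunit : IsUnit P := (Matrix.isUnit_iff_isUnit_det P).mpr
    ((isUnit_iff_constantCoeff).mpr (hdet ▸ isUnit_one))
  exact hunit.map (ofPowerSeries ℤ k).mapMatrix

theorem map_lderiv_add_mul_eq [Fintype ι] {P Q A : Matrix ι ι k⟦X⟧}
    (h : P.map (fun f => X * d⁄dX k f) + P * A = Q * P) :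
    (P.map (ofPowerSeries ℤ k)).map lderiv + P.map (ofPowerSeries ℤ k) *
        (single (-1) (1 : k) • A.map (ofPowerSeries ℤ k))
      = (single (-1) (1 : k) • Q.map (ofPowerSeries ℤ k)) * P.map (ofPowerSeries ℤ k) := by
  have hder : (P.map (ofPowerSeries ℤ k)).map lderiv
      = single (-1) (1 : k) • (P.map fun f => X * d⁄dX k f).map (ofPowerSeries ℤ k) := by
    ext i j
    simp [lderiv_ofPowerSeries]
  rw [hder, Matrix.mul_smul, Matrix.smul_mul, ← smul_add]
  congr 1
  rw [← Matrix.map_mul, ← Matrix.map_add _ (map_add _), h, Matrix.map_mul]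

end LaurentMatrix

theorem stmt_15_general {k : Type*} [Field k] {n : ℕ}
    (A : Matrix (Fin n) (Fin n) (LaurentSeries k))
    (hA : ∀ i j : Fin n, ∀ l : ℤ, l < -1 → (A i j).coeff l = 0) :
    ∃ x : Matrix (Fin n) (Fin n) (LaurentSeries k),
      (∀ i j : Fin n, ∀ l : ℤ, l < 0 → (x i j).coeff l = 0) ∧
      (Matrix.of fun i j => (x i j).coeff 0) = (1 : Matrix (Fin n) (Fin n) k) ∧
      IsUnit x ∧
      (∀ i j : Fin n,
        ((x * A * x⁻¹ + (x.map lderiv) * x⁻¹) i j).coeff (-1) = (A i j).coeff (-1)) ∧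
      ∀ adA : Module.End k (Matrix (Fin n) (Fin n) k),
        (∀ X : Matrix (Fin n) (Fin n) k,
          adA X = (Matrix.of fun i j => (A i j).coeff (-1)) * X
                  - X * (Matrix.of fun i j => (A i j).coeff (-1))) →
        ∀ l : ℤ, 0 ≤ l →
          (Matrix.of fun i j => ((x * A * x⁻¹ + (x.map lderiv) * x⁻¹) i j).coeff l)
            ∈ adA.maxGenEigenspace (((l : ℤ) : k) + 1) := by
  set T : Module.End k (Matrix (Fin n) (Fin n) k) :=
    LinearMap.mulLeft k (laurentCoeff A (-1)) - LinearMap.mulRight k (laurentCoeff A (-1))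
  obtain ⟨b, X, hX₀, hb₀, hb, hXb⟩ :=
    exists_aligned_coeffs T (fun m => laurentCoeff A (m - 1)) fun _ => rfl
  set x := (powerSeriesMatrix X).map (HahnSeries.ofPowerSeries ℤ k)
  set B := HahnSeries.single (-1) (1 : k) • (powerSeriesMatrix b).map (HahnSeries.ofPowerSeries ℤ k)
  have hx : IsUnit x := isUnit_map_ofPowerSeries (by rw [map_coeff_powerSeriesMatrix, hX₀])
  have hgauge : x * A * x⁻¹ + x.map lderiv * x⁻¹ = B := by
    refine Matrix.gauge_eq_of_add_mul_eq hx ?_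
    rw [eq_single_neg_one_smul_of_coeff_eq_zero A hA]
    exact map_lderiv_add_mul_eq (X_mul_derivative_add_mul_eq_mul hXb)
  have hB (m : ℕ) : laurentCoeff B (m - 1) = b m := by
    rw [laurentCoeff_single_neg_one_smul, sub_add_cancel, laurentCoeff_map_ofPowerSeries_natCast,
      map_coeff_powerSeriesMatrix]
  refine ⟨x, fun i j l hl => ?_, ?_, hx, fun i j => ?_, fun adA hadA l hl => ?_⟩
  · exact congrFun (congrFun (laurentCoeff_map_ofPowerSeries_of_neg _ hl) i) j
  · have h := laurentCoeff_map_ofPowerSeries_natCast (powerSeriesMatrix X) 0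
    rwa [map_coeff_powerSeriesMatrix, hX₀, Nat.cast_zero] at h
  · have h := hB 0
    rw [hb₀, Nat.cast_zero, zero_sub] at h
    rw [hgauge]
    exact congrFun (congrFun h i) j
  · have hadA : adA = T := LinearMap.ext fun Y => hadA Y
    lift l to ℕ using hl
    have h := hB (l + 1)
    rw [Nat.cast_succ, add_sub_cancel_right] at h
    change laurentCoeff _ _ ∈ _
    rw [hadA, hgauge, h]
    exact_mod_cast hb (l + 1)

/-- Every matrix connection with at worst a simple pole can be gauged, by an element
of `GLₙ(k⟦t⟧)` congruent to `1` mod `t`, into aligned form: the residue is unchanged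
and the coefficient of `tʲ` (for `j ≥ 0`) lies in the generalized eigenspace of
`ad(A₋₁)` with eigenvalue `j+1`. -/
theorem stmt_15 {k : Type*} [Field k] [CharZero k] [IsAlgClosed k] {n : ℕ}
    (A : Matrix (Fin n) (Fin n) (LaurentSeries k))
    (hA : ∀ i j : Fin n, ∀ l : ℤ, l < -1 → (A i j).coeff l = 0) :
    ∃ x : Matrix (Fin n) (Fin n) (LaurentSeries k),
      (∀ i j : Fin n, ∀ l : ℤ, l < 0 → (x i j).coeff l = 0) ∧
      (Matrix.of fun i j => (x i j).coeff 0) = (1 : Matrix (Fin n) (Fin n) k) ∧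
      IsUnit x ∧
      (∀ i j : Fin n,
        ((x * A * x⁻¹ + (x.map lderiv) * x⁻¹) i j).coeff (-1) = (A i j).coeff (-1)) ∧
      ∀ adA : Module.End k (Matrix (Fin n) (Fin n) k),
        (∀ X : Matrix (Fin n) (Fin n) k,
          adA X = (Matrix.of fun i j => (A i j).coeff (-1)) * X
                  - X * (Matrix.of fun i j => (A i j).coeff (-1))) →
        ∀ l : ℤ, 0 ≤ l →
          (Matrix.of fun i j => ((x * A * x⁻¹ + (x.map lderiv) * x⁻¹) i j).coeff l)
            ∈ adA.maxGenEigenspace (((l : ℤ) : k) + 1) :=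
  stmt_15_general A hA
end
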